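/- In ℝ³, the maximum size of a point set determining exactly one distinct triangle is 4, achieved both by the regular tetrahedron (equilateral triangle) and by a rectangle (right triangle). -/

import Mathlib

/-!
If three points `x, y, z` of `S` were collinear, with `y` between `x` and `z`, pick `w ∈ S` off
their line: the triangles `xyw`, `yzw`, `xzw` have equal perimeters, and with
`d(x,z) = d(x,y) + d(y,z)` this gives `d(y,w) = d(y,x) + d(x,w)`, a degenerate triangle. Hence any
three points of `S` form congruent triangles. Among five points this triangle is either equilateral,
impossible since pairwise equidistant points are affinely independent and ℝ³ holds at most four,
or it has a side length `v` occurring exactly once; then the pairs at distance `v` form a graph on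
five vertices in which every triangle has exactly one edge, and no such graph exists.
-/

/-- A point of ℝ³ given by its coordinates. -/
def pt3 (x y z : ℝ) : EuclideanSpace ℝ (Fin 3) := WithLp.toLp 2 ![x, y, z]

/-- A finite set `S` determines exactly one distinct triangle: it contains some
non-collinear triple, and any two non-collinear triples of distinct points of `S`
have the same multiset of pairwise distances. -/
def DeterminesOneTriangle (S : Finset (EuclideanSpace ℝ (Fin 3))) : Prop :=
  (∃ a ∈ S, ∃ b ∈ S, ∃ c ∈ S, a ≠ b ∧ a ≠ c ∧ b ≠ c ∧
    ¬ Collinear ℝ ({a, b, c} : Set (EuclideanSpace ℝ (Fin 3)))) ∧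
  (∀ a ∈ S, ∀ b ∈ S, ∀ c ∈ S, a ≠ b → a ≠ c → b ≠ c →
    ¬ Collinear ℝ ({a, b, c} : Set (EuclideanSpace ℝ (Fin 3))) →
    ∀ a' ∈ S, ∀ b' ∈ S, ∀ c' ∈ S, a' ≠ b' → a' ≠ c' → b' ≠ c' →
    ¬ Collinear ℝ ({a', b', c'} : Set (EuclideanSpace ℝ (Fin 3))) →
    ({dist a b, dist a c, dist b c} : Multiset ℝ) =
      {dist a' b', dist a' c', dist b' c'})

open RealInnerProductSpace Finset

local notation "ℝ³" => EuclideanSpace ℝ (Fin 3)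

theorem linearIndependent_of_inner_eq {V ι : Type*} [NormedAddCommGroup V]
    [InnerProductSpace ℝ V] {u : ι → V} {a b : ℝ} (ha : 0 ≤ a) (hab : a < b)
    (hdiag : ∀ i, ⟪u i, u i⟫ = b) (hoff : Pairwise fun i j => ⟪u i, u j⟫ = a) :
    LinearIndependent ℝ u := by
  classical
  rw [linearIndependent_iff']
  intro s g hg
  have key : ∀ j ∈ s, a * ∑ i ∈ s, g i + (b - a) * g j = 0 := by
    intro j hj
    have hinner : ∀ i, ⟪u i, u j⟫ = a + if i = j then b - a else 0 := by
      intro i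
      split_ifs with hij
      · subst hij; rw [hdiag]; ring
      · rw [hoff hij, add_zero]
    have h0 := congrArg (⟪·, u j⟫) hg
    simp only [sum_inner, real_inner_smul_left, hinner, inner_zero_left, mul_add,
      sum_add_distrib, mul_ite, mul_zero, sum_ite_eq', if_pos hj] at h0
    rw [← sum_mul] at h0
    linarith
  have hsum : ∑ i ∈ s, g i = 0 := by
    have := sum_congr rfl key
    simp only [sum_add_distrib, sum_const, ← mul_sum, nsmul_eq_mul, mul_zero] at this
    have hpos : 0 < (#s : ℝ) * a + (b - a) := by
      nlinarith [mul_nonneg (Nat.cast_nonneg (α := ℝ) #s) ha]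
    have hprod : ((#s : ℝ) * a + (b - a)) * ∑ i ∈ s, g i = 0 := by linarith
    exact (mul_eq_zero.1 hprod).resolve_left hpos.ne'
  intro j hj
  have := key j hj
  rw [hsum, mul_zero, zero_add] at this
  exact (mul_eq_zero.1 this).resolve_left (sub_ne_zero.2 hab.ne')

theorem affineIndependent_of_pairwise_dist_eq {V P ι : Type*} [NormedAddCommGroup V]
    [InnerProductSpace ℝ V] [MetricSpace P] [NormedAddTorsor V P] {p : ι → P} {e : ℝ}
    (he : e ≠ 0) (h : Pairwise fun i j => dist (p i) (p j) = e) : AffineIndependent ℝ p := by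
  rcases isEmpty_or_nonempty ι with _ | ⟨⟨i₀⟩⟩
  · exact affineIndependent_of_subsingleton ℝ p
  rw [affineIndependent_iff_linearIndependent_vsub ℝ p i₀]
  have hnorm : ∀ i : {i // i ≠ i₀}, ‖p i -ᵥ p i₀‖ = e := fun i => by
    rw [← dist_eq_norm_vsub, h i.2]
  refine linearIndependent_of_inner_eq (a := e ^ 2 / 2) (b := e ^ 2) (by positivity)
    (by have := sq_pos_of_ne_zero he; linarith) (fun i => by rw [real_inner_self_eq_norm_sq, hnorm])
    (fun i j hij => ?_)
  have hdiff : ‖(p i -ᵥ p i₀) - (p j -ᵥ p i₀)‖ = e := by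
    rw [vsub_sub_vsub_cancel_right, ← dist_eq_norm_vsub, h (Subtype.coe_ne_coe.2 hij)]
  have := norm_sub_sq_real (p i -ᵥ p i₀) (p j -ᵥ p i₀)
  rw [hdiff, hnorm, hnorm] at this
  linarith

theorem card_le_finrank_succ_of_pairwise_dist_eq {V P ι : Type*} [NormedAddCommGroup V]
    [InnerProductSpace ℝ V] [FiniteDimensional ℝ V] [MetricSpace P] [NormedAddTorsor V P]
    [Fintype ι] {p : ι → P} {e : ℝ} (he : e ≠ 0)
    (h : Pairwise fun i j => dist (p i) (p j) = e) :
    Fintype.card ι ≤ Module.finrank ℝ V + 1 :=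
  (affineIndependent_of_pairwise_dist_eq he h).card_le_finrank_succ.trans
    (Nat.add_le_add_right (Submodule.finrank_le _) 1)

theorem not_exactly_one_edge_in_every_triangle (E : Fin 5 → Fin 5 → Prop) :
    ¬ ∀ i j k, i ≠ j → i ≠ k → j ≠ k →
      (E i j ∧ ¬E i k ∧ ¬E j k) ∨ (¬E i j ∧ E i k ∧ ¬E j k) ∨
        (¬E i j ∧ ¬E i k ∧ E j k) := by
  intro h
  -- an edge `ab` forces an edge between any two vertices outside `{a, b}`
  have key : ∀ a b c d e : Fin 5, [a, b, c, d, e].Nodup → ¬E a b := by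
    intro a b c d e hn hedge
    simp only [List.nodup_cons, List.mem_cons, List.not_mem_nil, List.nodup_nil, or_false,
      not_or] at hn
    obtain ⟨⟨hab, hac, had, hae⟩, ⟨hbc, hbd, hbe⟩, ⟨hcd, hce⟩, hde, -⟩ := hn
    have hout : ∀ x, a ≠ x → b ≠ x → ¬E a x := by
      intro x hax hbx
      rcases h a b x hab hax hbx with ht | ht | ht <;> tauto
    have hin : ∀ x y, a ≠ x → a ≠ y → b ≠ x → b ≠ y → x ≠ y → E x y := by
      intro x y hax hay hbx hby hxy
      rcases h a x y hax hay hxy with ht | ht | ht <;> tauto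
    rcases h c d e hcd hce hde with ht | ht | ht
    · exact ht.2.2 (hin d e had hae hbd hbe hde)
    · exact ht.2.2 (hin d e had hae hbd hbe hde)
    · exact ht.1 (hin c d hac had hbc hbd hcd)
  rcases h 0 1 2 (by decide) (by decide) (by decide) with ht | ht | ht
  · exact key 0 1 2 3 4 (by decide) ht.1
  · exact key 0 2 1 3 4 (by decide) ht.2.1
  · exact key 1 2 0 3 4 (by decide) ht.2.2

theorem Multiset.exactly_one_of_count_triple_eq_one {α : Type*} [DecidableEq α] {x y z v : α}
    (h : count v {x, y, z} = 1) :
    (x = v ∧ y ≠ v ∧ z ≠ v) ∨ (x ≠ v ∧ y = v ∧ z ≠ v) ∨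
      (x ≠ v ∧ y ≠ v ∧ z = v) := by
  simp only [insert_eq_cons, count_cons, count_singleton] at h
  split_ifs at h <;> simp_all [eq_comm]

theorem eq_and_eq_or_exists_count_eq_one {α : Type*} [DecidableEq α] (x y z : α) :
    (x = y ∧ x = z) ∨ ∃ v, Multiset.count v {x, y, z} = 1 := by
  by_cases hxy : x = y <;> by_cases hxz : x = z
  · exact .inl ⟨hxy, hxz⟩
  · subst hxy; exact .inr ⟨z, by simp [Ne.symm hxz]⟩
  · subst hxz; exact .inr ⟨y, by simp [Ne.symm hxy]⟩
  · exact .inr ⟨x, by simp [hxy, hxz]⟩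

theorem not_collinear_iff_dist_lt_dist_add_dist {V P : Type*} [NormedAddCommGroup V]
    [NormedSpace ℝ V] [StrictConvexSpace ℝ V] [MetricSpace P] [NormedAddTorsor V P]
    {x y z : P} :
    ¬Collinear ℝ ({x, y, z} : Set P) ↔
      dist x z < dist x y + dist y z ∧ dist y x < dist y z + dist z x ∧
        dist z y < dist z x + dist x y := by
  simp only [dist_lt_dist_add_dist_iff (V := V)]
  constructor
  · intro h
    refine ⟨fun hb => h hb.collinear, fun hb => h ?_, fun hb => h ?_⟩
    · simpa only [Set.pair_comm z x, Set.insert_comm y x] using hb.collinear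
    · simpa only [Set.insert_comm z x, Set.pair_comm z y] using hb.collinear
  · rintro ⟨h₁, h₂, h₃⟩ h
    rcases h.wbtw_or_wbtw_or_wbtw with h | h | h
    exacts [h₁ h, h₂ h, h₃ h]

namespace DeterminesOneTriangle

variable {S : Finset ℝ³}

theorem exists_mem_notMem_affineSpan_pair (hS : DeterminesOneTriangle S) (x y : ℝ³) :
    ∃ w ∈ S, w ∉ line[ℝ, x, y] := by
  obtain ⟨⟨a, ha, b, hb, c, hc, -, -, -, habc⟩, -⟩ := hS
  by_contra! h
  exact habc (collinear_triple_of_mem_affineSpan_pair (h a ha) (h b hb) (h c hc))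

theorem perimeter_eq (hS : DeterminesOneTriangle S) {a b c a' b' c' : ℝ³}
    (ha : a ∈ S) (hb : b ∈ S) (hc : c ∈ S) (habc : ¬Collinear ℝ ({a, b, c} : Set ℝ³))
    (ha' : a' ∈ S) (hb' : b' ∈ S) (hc' : c' ∈ S)
    (habc' : ¬Collinear ℝ ({a', b', c'} : Set ℝ³)) :
    dist a b + dist a c + dist b c = dist a' b' + dist a' c' + dist b' c' := by
  simpa [add_assoc] using congrArg Multiset.sum <| hS.2
    a ha b hb c hc (ne₁₂_of_not_collinear habc) (ne₁₃_of_not_collinear habc)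
      (ne₂₃_of_not_collinear habc) habc
    a' ha' b' hb' c' hc' (ne₁₂_of_not_collinear habc') (ne₁₃_of_not_collinear habc')
      (ne₂₃_of_not_collinear habc') habc'

theorem not_wbtw (hS : DeterminesOneTriangle S) {x y z : ℝ³} (hx : x ∈ S) (hy : y ∈ S)
    (hz : z ∈ S) (hxy : x ≠ y) (hyz : y ≠ z) : ¬Wbtw ℝ x y z := by
  intro hxyz
  have hxz : x ≠ z := by rintro rfl; exact hxy ((wbtw_self_iff ℝ).1 hxyz).symm
  obtain ⟨w, hw, hwl⟩ := hS.exists_mem_notMem_affineSpan_pair x z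
  have hy_line := hxyz.mem_affineSpan
  have n_xzw : ¬Collinear ℝ ({x, z, w} : Set ℝ³) := fun h =>
    hwl (h.mem_affineSpan_of_mem_of_ne (by simp) (by simp) (by simp) hxz)
  have n_xyw : ¬Collinear ℝ ({x, y, w} : Set ℝ³) := fun h =>
    hwl (affineSpan_pair_le_of_right_mem hy_line
      (h.mem_affineSpan_of_mem_of_ne (by simp) (by simp) (by simp) hxy))
  have n_yzw : ¬Collinear ℝ ({y, z, w} : Set ℝ³) := fun h =>
    hwl (affineSpan_pair_le_of_left_mem hy_line
      (h.mem_affineSpan_of_mem_of_ne (by simp) (by simp) (by simp) hyz))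
  have h₁ := hS.perimeter_eq hx hy hw n_xyw hx hz hw n_xzw
  have h₂ := hS.perimeter_eq hy hz hw n_yzw hx hz hw n_xzw
  have h_strict := (not_collinear_iff_dist_lt_dist_add_dist.1 n_xyw).2.2
  have := hxyz.dist_add_dist
  linarith [dist_comm w x, dist_comm w y]

theorem not_collinear (hS : DeterminesOneTriangle S) {x y z : ℝ³} (hx : x ∈ S) (hy : y ∈ S)
    (hz : z ∈ S) (hxy : x ≠ y) (hxz : x ≠ z) (hyz : y ≠ z) :
    ¬Collinear ℝ ({x, y, z} : Set ℝ³) :=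
  fun h => by
    rcases h.wbtw_or_wbtw_or_wbtw with h | h | h
    exacts [hS.not_wbtw hx hy hz hxy hyz h, hS.not_wbtw hy hz hx hyz hxz.symm h,
      hS.not_wbtw hz hx hy hxz.symm hxy h]

theorem dist_triple_eq (hS : DeterminesOneTriangle S) {a b c a' b' c' : ℝ³}
    (ha : a ∈ S) (hb : b ∈ S) (hc : c ∈ S) (hab : a ≠ b) (hac : a ≠ c) (hbc : b ≠ c)
    (ha' : a' ∈ S) (hb' : b' ∈ S) (hc' : c' ∈ S) (hab' : a' ≠ b') (hac' : a' ≠ c')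
    (hbc' : b' ≠ c') :
    ({dist a b, dist a c, dist b c} : Multiset ℝ) = {dist a' b', dist a' c', dist b' c'} :=
  hS.2 a ha b hb c hc hab hac hbc (hS.not_collinear ha hb hc hab hac hbc)
    a' ha' b' hb' c' hc' hab' hac' hbc' (hS.not_collinear ha' hb' hc' hab' hac' hbc')

theorem card_le_four (hS : DeterminesOneTriangle S) : S.card ≤ 4 := by
  by_contra! hcard
  obtain ⟨f⟩ : Nonempty (Fin 5 ↪ S) :=
    Function.Embedding.nonempty_of_card_le (by simpa using hcard.nat_succ_le)
  set q : Fin 5 → ℝ³ := fun i => f i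
  have hq : ∀ i, q i ∈ S := fun i => (f i).2
  have hq_ne : ∀ {i j}, i ≠ j → q i ≠ q j := fun hij h => hij (f.injective (Subtype.ext h))
  have htri : ∀ i j k, i ≠ j → i ≠ k → j ≠ k →
      ({dist (q i) (q j), dist (q i) (q k), dist (q j) (q k)} : Multiset ℝ) =
        {dist (q 0) (q 1), dist (q 0) (q 2), dist (q 1) (q 2)} := fun i j k hij hik hjk =>
    hS.dist_triple_eq (hq i) (hq j) (hq k) (hq_ne hij) (hq_ne hik) (hq_ne hjk)
      (hq 0) (hq 1) (hq 2) (hq_ne (by decide)) (hq_ne (by decide)) (hq_ne (by decide))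
  rcases eq_and_eq_or_exists_count_eq_one (dist (q 0) (q 1)) (dist (q 0) (q 2))
    (dist (q 1) (q 2)) with ⟨h₀₂, h₁₂⟩ | ⟨v, hv⟩
  · have hequi : Pairwise fun i j => dist (q i) (q j) = dist (q 0) (q 1) := fun i j hij => by
      obtain ⟨k, hki, hkj⟩ : ∃ k, k ≠ i ∧ k ≠ j := by revert i j; decide
      have hmem : dist (q i) (q j) ∈
          ({dist (q i) (q j), dist (q i) (q k), dist (q j) (q k)} : Multiset ℝ) := by simp
      rw [htri i j k hij hki.symm hkj.symm, ← h₀₂, ← h₁₂] at hmem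
      simpa using hmem
    have := card_le_finrank_succ_of_pairwise_dist_eq (dist_ne_zero.2 (hq_ne (by decide))) hequi
    simp at this
  · refine not_exactly_one_edge_in_every_triangle (fun i j => dist (q i) (q j) = v)
      fun i j k hij hik hjk => Multiset.exactly_one_of_count_triple_eq_one ?_
    rwa [htri i j k hij hik hjk]

end DeterminesOneTriangle

theorem dist_pt3 (x y z x' y' z' : ℝ) :
    dist (pt3 x y z) (pt3 x' y' z') = √((x - x') ^ 2 + (y - y') ^ 2 + (z - z') ^ 2) := by
  simp [EuclideanSpace.dist_eq, pt3, Fin.sum_univ_three, Real.dist_eq, sq_abs]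

theorem determinesOneTriangle_of_dist_triple_eq {S : Finset ℝ³} (T : Multiset ℝ)
    (hS : ∃ a ∈ S, ∃ b ∈ S, ∃ c ∈ S, a ≠ b ∧ a ≠ c ∧ b ≠ c ∧
      ¬Collinear ℝ ({a, b, c} : Set ℝ³))
    (hT : ∀ a ∈ S, ∀ b ∈ S, ∀ c ∈ S, a ≠ b → a ≠ c → b ≠ c →
      ({dist a b, dist a c, dist b c} : Multiset ℝ) = T) :
    DeterminesOneTriangle S :=
  ⟨hS, fun a ha b hb c hc hab hac hbc _ a' ha' b' hb' c' hc' hab' hac' hbc' _ =>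
    (hT a ha b hb c hc hab hac hbc).trans (hT a' ha' b' hb' c' hc' hab' hac' hbc').symm⟩

theorem determinesOneTriangle_of_pairwise_dist_eq {S : Finset ℝ³} {e : ℝ} (he : 0 < e)
    (hS : ∃ a ∈ S, ∃ b ∈ S, ∃ c ∈ S, a ≠ b ∧ a ≠ c ∧ b ≠ c)
    (h : ∀ p ∈ S, ∀ q ∈ S, p ≠ q → dist p q = e) : DeterminesOneTriangle S := by
  refine determinesOneTriangle_of_dist_triple_eq {e, e, e} ?_
    fun a ha b hb c hc hab hac hbc => by rw [h a ha b hb hab, h a ha c hc hac, h b hb c hc hbc]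
  obtain ⟨a, ha, b, hb, c, hc, hab, hac, hbc⟩ := hS
  refine ⟨a, ha, b, hb, c, hc, hab, hac, hbc, not_collinear_iff_dist_lt_dist_add_dist.2 ?_⟩
  simp only [h _ ha _ hb hab, h _ ha _ hc hac, h _ hb _ hc hbc, h _ hb _ ha hab.symm,
    h _ hc _ ha hac.symm, h _ hc _ hb hbc.symm]
  exact ⟨by linarith, by linarith, by linarith⟩

section Examples

variable [DecidableEq ℝ³]

def regularTetrahedron : Finset ℝ³ := {pt3 0 0 0, pt3 1 1 0, pt3 1 0 1, pt3 0 1 1}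

theorem card_regularTetrahedron : regularTetrahedron.card = 4 := by
  refine Finset.card_eq_four.2 ⟨_, _, _, _, ?_, ?_, ?_, ?_, ?_, ?_, rfl⟩ <;> simp [pt3]

theorem dist_eq_sqrt_two_of_mem_regularTetrahedron :
    ∀ p ∈ regularTetrahedron, ∀ q ∈ regularTetrahedron, p ≠ q → dist p q = √2 := by
  simp only [regularTetrahedron, Finset.mem_insert, Finset.mem_singleton]
  rintro p (rfl | rfl | rfl | rfl) q (rfl | rfl | rfl | rfl) hpq <;>
    first | exact absurd rfl hpq | (rw [dist_pt3]; norm_num)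

theorem determinesOneTriangle_regularTetrahedron : DeterminesOneTriangle regularTetrahedron :=
  determinesOneTriangle_of_pairwise_dist_eq (by positivity)
    ⟨pt3 0 0 0, by simp [regularTetrahedron], pt3 1 1 0, by simp [regularTetrahedron],
      pt3 1 0 1, by simp [regularTetrahedron], by simp [pt3], by simp [pt3], by simp [pt3]⟩
    dist_eq_sqrt_two_of_mem_regularTetrahedron

def rectangle (a b : ℝ) : Finset ℝ³ := {pt3 0 0 0, pt3 a 0 0, pt3 a b 0, pt3 0 b 0}

theorem card_rectangle {a b : ℝ} (ha : 0 < a) (hb : 0 < b) : (rectangle a b).card = 4 := by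
  refine Finset.card_eq_four.2 ⟨_, _, _, _, ?_, ?_, ?_, ?_, ?_, ?_, rfl⟩ <;>
    simp [pt3, ha.ne, ha.ne', hb.ne]

theorem dist_triple_eq_of_mem_rectangle {a b : ℝ} (ha : 0 < a) (hb : 0 < b) :
    ∀ p ∈ rectangle a b, ∀ q ∈ rectangle a b, ∀ r ∈ rectangle a b,
      p ≠ q → p ≠ r → q ≠ r →
      ({dist p q, dist p r, dist q r} : Multiset ℝ) = {a, b, √(a ^ 2 + b ^ 2)} := by
  simp only [rectangle, Finset.mem_insert, Finset.mem_singleton]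
  rintro p (rfl | rfl | rfl | rfl) q (rfl | rfl | rfl | rfl) r (rfl | rfl | rfl | rfl)
    hpq hpr hqr <;>
    first | exact absurd rfl hpq | exact absurd rfl hpr | exact absurd rfl hqr |
      simp only [dist_pt3, sub_zero, zero_sub, sub_self, neg_sq, zero_pow two_ne_zero, add_zero,
        zero_add, Real.sqrt_sq ha.le, Real.sqrt_sq hb.le, Multiset.insert_eq_cons,
        ← Multiset.cons_zero, Multiset.cons_swap]

theorem determinesOneTriangle_rectangle {a b : ℝ} (ha : 0 < a) (hb : 0 < b) :
    DeterminesOneTriangle (rectangle a b) := by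
  refine determinesOneTriangle_of_dist_triple_eq _ ⟨pt3 0 0 0, by simp [rectangle],
    pt3 a 0 0, by simp [rectangle], pt3 a b 0, by simp [rectangle], ?_⟩
    (dist_triple_eq_of_mem_rectangle ha hb)
  refine ⟨by simp [pt3, ha.ne], by simp [pt3, ha.ne], by simp [pt3, hb.ne], ?_⟩
  have hdiag_a : a < √(a ^ 2 + b ^ 2) := Real.lt_sqrt_of_sq_lt (by nlinarith)
  have hdiag_b : b < √(a ^ 2 + b ^ 2) := Real.lt_sqrt_of_sq_lt (by nlinarith)
  have hdiag : √(a ^ 2 + b ^ 2) < a + b := (Real.sqrt_lt' (by linarith)).2 (by nlinarith)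
  rw [not_collinear_iff_dist_lt_dist_add_dist]
  simp only [dist_pt3, sub_zero, zero_sub, sub_self, neg_sq, zero_pow two_ne_zero, add_zero,
    zero_add, Real.sqrt_sq ha.le, Real.sqrt_sq hb.le]
  exact ⟨by linarith, by linarith, by linarith⟩

end Examples

/-- In ℝ³ the maximum size of a point set determining exactly one distinct triangle
is 4, achieved both by a regular tetrahedron and by a (non-square) rectangle. -/
theorem max_one_triangle_R3 :
    (∀ S : Finset (EuclideanSpace ℝ (Fin 3)), DeterminesOneTriangle S → S.card ≤ 4) ∧
    (∃ S : Finset (EuclideanSpace ℝ (Fin 3)), S.card = 4 ∧ DeterminesOneTriangle S ∧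
      ∃ e : ℝ, 0 < e ∧ ∀ p ∈ S, ∀ q ∈ S, p ≠ q → dist p q = e) ∧
    (∃ a b : ℝ, 0 < a ∧ 0 < b ∧ a ≠ b ∧
      ∃ S : Finset (EuclideanSpace ℝ (Fin 3)), S.card = 4 ∧
        (S : Set (EuclideanSpace ℝ (Fin 3))) =
          {pt3 0 0 0, pt3 a 0 0, pt3 a b 0, pt3 0 b 0} ∧
        DeterminesOneTriangle S) := by
  classical
  refine ⟨fun S hS => hS.card_le_four,
    ⟨regularTetrahedron, card_regularTetrahedron, determinesOneTriangle_regularTetrahedron,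
      √2, by positivity, dist_eq_sqrt_two_of_mem_regularTetrahedron⟩,
    ⟨1, 2, one_pos, two_pos, by norm_num, rectangle 1 2, card_rectangle one_pos two_pos,
      by simp [rectangle], determinesOneTriangle_rectangle one_pos two_pos⟩⟩
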